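/- arXiv:2405.02708 — 2 statements merged into one kernel-verified Lean document; each statement's English description precedes it below -/
import Mathlib

section
/- For every n ≥ 2 and every subset A of L, the space (X, τ(A)) is locally compact if and only if A = L (equivalently, if and only if τ(A) is the Euclidean subspace topology on X). -/
open Metric Set TopologicalSpace

noncomputable section

/-- The last coordinate `x (n-1)` of a point of `EuclideanSpace ℝ (Fin n)`
(junk value `0` if `n = 0`). -/
def lastCoord (n : ℕ) (x : EuclideanSpace ℝ (Fin n)) : ℝ :=
  if h : 0 < n then x ⟨n - 1, Nat.sub_lt h one_pos⟩ else 0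

/-- The closed upper half-space `X = {x : x (n-1) ≥ 0}`. -/
def HalfSpace (n : ℕ) : Set (EuclideanSpace ℝ (Fin n)) := {x | 0 ≤ lastCoord n x}

/-- The open upper half-space `P = {x : x (n-1) > 0}`. -/
def OpenHalf (n : ℕ) : Set (EuclideanSpace ℝ (Fin n)) := {x | 0 < lastCoord n x}

/-- The boundary hyperplane `L = {x : x (n-1) = 0}`. -/
def Bdry (n : ℕ) : Set (EuclideanSpace ℝ (Fin n)) := {x | lastCoord n x = 0}

/-- The `n`-th standard basis vector `e` (junk value `0` if `n = 0`). -/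
def eVec (n : ℕ) : EuclideanSpace ℝ (Fin n) :=
  if h : 0 < n then EuclideanSpace.single ⟨n - 1, Nat.sub_lt h one_pos⟩ (1 : ℝ) else 0

/-- The tangent ball `B̃(a, ε) = {a} ∪ B(a + ε • e, ε)`. -/
def tangentBall (n : ℕ) (a : EuclideanSpace ℝ (Fin n)) (ε : ℝ) :
    Set (EuclideanSpace ℝ (Fin n)) :=
  {a} ∪ ball (a + ε • eVec n) ε

/-- The generating family for the topology `τ(A)` on `X`:
balls `B(a,ε)` with `a ∈ P`, `0 < ε < a (n-1)`; traces `B(a,ε) ∩ X` with `a ∈ A`, `ε > 0`;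
and tangent balls `B̃(a,ε)` with `a ∈ L \ A`, `ε > 0`. -/
def niemGen (n : ℕ) (A : Set (EuclideanSpace ℝ (Fin n))) : Set (Set (HalfSpace n)) :=
  {s | ∃ a ∈ OpenHalf n, ∃ ε, 0 < ε ∧ ε < lastCoord n a ∧
      s = Subtype.val ⁻¹' ball a ε} ∪
  {s | ∃ a ∈ A, ∃ ε, 0 < ε ∧ s = Subtype.val ⁻¹' ball a ε} ∪
  {s | ∃ a ∈ Bdry n \ A, ∃ ε, 0 < ε ∧ s = Subtype.val ⁻¹' tangentBall n a ε}

/-- The topology `τ(A)` on `X`; `τ(∅)` is the Niemytzki topology `τ_N`. -/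
def tau (n : ℕ) (A : Set (EuclideanSpace ℝ (Fin n))) : TopologicalSpace (HalfSpace n) :=
  generateFrom (niemGen n A)

/-- The inclusion of `L` into `X`. -/
def inclLX (n : ℕ) (x : Bdry n) : HalfSpace n := ⟨x.1, le_of_eq x.2.symm⟩

/-- The subspace topology `τ(A)|_L` on `L` induced from `(X, τ(A))`. -/
def tauL (n : ℕ) (A : Set (EuclideanSpace ℝ (Fin n))) : TopologicalSpace (Bdry n) :=
  TopologicalSpace.induced (inclLX n) (tau n A)

/-- A space is perfect if every closed set is a `Gδ`-set. -/
def IsPerfectSpace (X : Type*) [TopologicalSpace X] : Prop :=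
  ∀ s : Set X, IsClosed s → IsGδ s

/-- An `Fσ`-set: a countable union of closed sets. -/
def IsFsigma {X : Type*} [TopologicalSpace X] (s : Set X) : Prop :=
  ∃ F : ℕ → Set X, (∀ i, IsClosed (F i)) ∧ s = ⋃ i, F i

/-- Countably paracompact: every countable open cover admits a locally finite open refinement. -/
def CountablyParacompact (X : Type*) [TopologicalSpace X] : Prop :=
  ∀ u : ℕ → Set X, (∀ i, IsOpen (u i)) → (⋃ i, u i) = Set.univ →
    ∃ (ι : Type) (v : ι → Set X), (∀ j, IsOpen (v j)) ∧ (⋃ j, v j) = Set.univ ∧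
      LocallyFinite v ∧ ∀ j, ∃ i, v j ⊆ u i

/-- A zero set: the zero locus of a continuous real-valued function. -/
def IsZeroSet {X : Type*} [TopologicalSpace X] (s : Set X) : Prop :=
  ∃ f : X → ℝ, Continuous f ∧ s = f ⁻¹' {0}

/-- `Y` is z-embedded in `X` if every zero set of the subspace `Y`
is the trace on `Y` of a zero set of `X`. -/
def ZEmbedded {X : Type*} [TopologicalSpace X] (Y : Set X) : Prop :=
  ∀ s : Set Y, IsZeroSet s → ∃ Z : Set X, IsZeroSet Z ∧ s = Subtype.val ⁻¹' Z

/-- `Y` is `C*`-embedded in `X` if every bounded continuous real-valued function on the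
subspace `Y` extends to a bounded continuous function on `X`. -/
def CStarEmbedded {X : Type*} [TopologicalSpace X] (Y : Set X) : Prop :=
  ∀ f : Y → ℝ, Continuous f → (∃ M, ∀ y, |f y| ≤ M) →
    ∃ g : X → ℝ, Continuous g ∧ (∃ M, ∀ x, |g x| ≤ M) ∧ ∀ y : Y, g ↑y = f y
end

/-!
`τ(A)` is finer than the Euclidean topology, and equal to it for `A = L`; since `X` is closed in
`ℝⁿ`, `(X, τ(L))` is locally compact. Conversely, let `a ∈ L \ A`. Every `τ(A)`-neighbourhood of
`a` contains a tangent ball `B̃(a, ε)`. For a unit vector `w ⊥ e` the points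
`a + t w + (t²/ε) e`, `0 < t < ε`, lie in `B(a + εe, ε)` but outside the closed ball of radius
`ε/2` tangent to `L` at `a`, and tend to `a` in the Euclidean topology as `t → 0⁺`. Inside a
`τ(A)`-compact neighbourhood they would have a `τ(A)`-cluster point; it is also a Euclidean
cluster point, hence equal to `a`, yet `B̃(a, ε/2)` is a `τ(A)`-neighbourhood of `a` missing all
of them.
-/

open Filter Topology

section

variable {E : Type*} [NormedAddCommGroup E] [InnerProductSpace ℝ E]

theorem add_smul_add_smul_mem_ball_diff_closedBall {e w : E} (he : ‖e‖ = 1) (hw : ‖w‖ = 1)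
    (hwe : inner ℝ w e = 0) (a : E) {ε t : ℝ} (ht : 0 < t) (htε : t < ε) :
    a + t • w + (t ^ 2 / ε) • e ∈ ball (a + ε • e) ε \ closedBall (a + (ε / 2) • e) (ε / 2) := by
  set s := t ^ 2 / ε
  have hε : 0 < ε := ht.trans htε
  have hsε : s * ε = t ^ 2 := div_mul_cancel₀ _ hε.ne'
  have hs : 0 < s := by positivity
  have hst : s < t := by
    rw [div_lt_iff₀ hε, sq]; exact mul_lt_mul_of_pos_left htε ht
  have dist_sq (c : ℝ) : dist (a + t • w + s • e) (a + c • e) ^ 2 = t ^ 2 + (s - c) ^ 2 := by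
    rw [dist_eq_norm, show a + t • w + s • e - (a + c • e) = t • w + (s - c) • e by module,
      norm_add_sq_real, real_inner_smul_left, real_inner_smul_right, hwe, norm_smul, norm_smul,
      he, hw]
    simp [sq_abs]
  refine ⟨?_, fun hmem => ?_⟩
  · refine lt_of_pow_lt_pow_left₀ 2 hε.le ?_
    nlinarith [dist_sq ε]
  · have := pow_le_pow_left₀ dist_nonneg (mem_closedBall.1 hmem) 2
    nlinarith [dist_sq (ε / 2)]

end

theorem IsCompact.mapClusterPt_of_tendsto_of_le {X ι : Type*} {t t₀ : TopologicalSpace X}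
    [@T2Space X t₀] (ht : t ≤ t₀) {K : Set X} (hK : @IsCompact X t K)
    {l : Filter ι} [l.NeBot] {u : ι → X} (huK : ∀ᶠ i in l, u i ∈ K) {x : X}
    (hu : Tendsto u l (@nhds X t₀ x)) : @MapClusterPt X t ι x l u := by
  obtain ⟨y, -, hy⟩ := @IsCompact.exists_clusterPt X t K hK _ _
    (le_principal_iff.2 (show K ∈ map u l from huK))
  have hy₀ : (@nhds X t₀ y ⊓ map u l).NeBot := NeBot.mono hy (inf_le_inf_right _ (nhds_mono ht))
  have hyx : y = x := @eq_of_nhds_neBot X t₀ _ y x (hy₀.mono (inf_le_inf_left _ hu))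
  exact hyx ▸ hy

section Geometry

variable {n : ℕ}

theorem lastCoord_eq_inner (hn : 0 < n) (x : EuclideanSpace ℝ (Fin n)) :
    lastCoord n x = inner ℝ (eVec n) x := by
  simp [lastCoord, eVec, hn, EuclideanSpace.inner_single_left]

theorem norm_eVec (hn : 0 < n) : ‖eVec n‖ = 1 := by
  simp [eVec, hn]

theorem lastCoord_add_smul_eVec (hn : 0 < n) (x : EuclideanSpace ℝ (Fin n)) (c : ℝ) :
    lastCoord n (x + c • eVec n) = lastCoord n x + c := by
  simp [lastCoord_eq_inner hn, inner_add_right, real_inner_smul_right, norm_eVec hn]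

theorem dist_add_smul_eVec (hn : 0 < n) (a : EuclideanSpace ℝ (Fin n)) (c d : ℝ) :
    dist (a + c • eVec n) (a + d • eVec n) = |c - d| := by
  rw [dist_add_left, dist_eq_norm, ← sub_smul, norm_smul, norm_eVec hn, mul_one,
    Real.norm_eq_abs]

theorem ball_subset_openHalf (hn : 0 < n) {b : EuclideanSpace ℝ (Fin n)} {r : ℝ}
    (hr : r ≤ lastCoord n b) : ball b r ⊆ OpenHalf n := by
  intro x hx
  have : lastCoord n b - lastCoord n x ≤ dist b x := by
    rw [lastCoord_eq_inner hn, lastCoord_eq_inner hn, ← inner_sub_right, dist_eq_norm]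
    simpa [norm_eVec hn] using real_inner_le_norm (eVec n) (b - x)
  change 0 < lastCoord n x
  linarith [mem_ball'.1 hx]

theorem ball_add_smul_eVec_subset_openHalf (hn : 0 < n) {a : EuclideanSpace ℝ (Fin n)}
    (ha : a ∈ Bdry n) (ε : ℝ) : ball (a + ε • eVec n) ε ⊆ OpenHalf n :=
  ball_subset_openHalf hn (by rw [lastCoord_add_smul_eVec hn, show lastCoord n a = 0 from ha,
    zero_add])

theorem tangentBall_subset_closedBall (hn : 0 < n) (a : EuclideanSpace ℝ (Fin n)) {ε : ℝ}
    (hε : 0 ≤ ε) : tangentBall n a ε ⊆ closedBall (a + ε • eVec n) ε := by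
  rintro y (rfl | hy)
  · rw [mem_closedBall, dist_self_add_right, norm_smul, norm_eVec hn, Real.norm_of_nonneg hε,
      mul_one]
  · exact ball_subset_closedBall hy

theorem tangentBall_subset_ball (hn : 0 < n) (a : EuclideanSpace ℝ (Fin n)) {ε : ℝ}
    (hε : 0 < ε) : tangentBall n a ε ⊆ ball a (2 * ε) := by
  rintro y (rfl | hy)
  · exact mem_ball_self (by positivity)
  · refine ball_subset_ball' ?_ hy
    rw [dist_self_add_left, norm_smul, norm_eVec hn, Real.norm_of_nonneg hε.le]
    linarith

theorem tangentBall_mono (hn : 0 < n) (a : EuclideanSpace ℝ (Fin n)) {δ ε : ℝ} (h : δ ≤ ε) :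
    tangentBall n a δ ⊆ tangentBall n a ε := by
  refine union_subset_union_right _ (ball_subset_ball' ?_)
  rw [dist_add_smul_eVec hn, abs_of_nonpos (by linarith)]
  linarith

theorem exists_norm_eq_one_inner_eVec_eq_zero (hn : 2 ≤ n) :
    ∃ w : EuclideanSpace ℝ (Fin n), ‖w‖ = 1 ∧ inner ℝ w (eVec n) = 0 := by
  refine ⟨EuclideanSpace.single ⟨0, by omega⟩ 1, by simp, ?_⟩
  simp [eVec, show 0 < n by omega, EuclideanSpace.inner_single_left, Fin.ext_iff]
  omega

end Geometry

section Tau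

variable {n : ℕ} {A : Set (EuclideanSpace ℝ (Fin n))}

theorem tangentBall_mem_nhds_tau {a : HalfSpace n} (ha : a.1 ∈ Bdry n \ A) {ε : ℝ} (hε : 0 < ε) :
    Subtype.val ⁻¹' tangentBall n a ε ∈ @nhds _ (tau n A) a :=
  @IsOpen.mem_nhds _ (tau n A) _ _ (isOpen_generateFrom_of_mem (Or.inr ⟨a, ha, ε, hε, rfl⟩))
    (Or.inl rfl)

theorem preimage_ball_mem_nhds_tau (hn : 0 < n) (x : HalfSpace n) {r : ℝ} (hr : 0 < r) :
    Subtype.val ⁻¹' ball x.1 r ∈ @nhds _ (tau n A) x := by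
  rcases (show (0 : ℝ) ≤ lastCoord n x from x.2).lt_or_eq with hx | hx
  · have hgen : Subtype.val ⁻¹' ball x.1 (min r (lastCoord n x / 2)) ∈ niemGen n A :=
      Or.inl (Or.inl ⟨x, hx, _, lt_min hr (half_pos hx), (min_le_right _ _).trans_lt
        (half_lt_self hx), rfl⟩)
    exact @mem_of_superset _ _ _ _ (@IsOpen.mem_nhds _ (tau n A) _ _
      (isOpen_generateFrom_of_mem hgen) (mem_ball_self (lt_min hr (half_pos hx))))
      (preimage_mono (ball_subset_ball (min_le_left _ _)))
  · by_cases hxA : x.1 ∈ A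
    · exact @IsOpen.mem_nhds _ (tau n A) _ _
        (isOpen_generateFrom_of_mem (Or.inl (Or.inr ⟨x, hxA, r, hr, rfl⟩))) (mem_ball_self hr)
    · refine @mem_of_superset _ _ _ _ (tangentBall_mem_nhds_tau ⟨hx.symm, hxA⟩ (half_pos hr))
        (preimage_mono ?_)
      simpa [mul_div_cancel₀] using tangentBall_subset_ball hn x.1 (half_pos hr)

theorem tau_le (hn : 0 < n) (A : Set (EuclideanSpace ℝ (Fin n))) :
    tau n A ≤ (inferInstance : TopologicalSpace (HalfSpace n)) := by
  refine continuous_iff_le_induced.1 ((@continuous_iff_continuousAt _ _ (tau n A)).2 fun x => ?_)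
  exact nhds_basis_ball.tendsto_right_iff.2 fun r hr => preimage_ball_mem_nhds_tau hn x hr

theorem tau_bdry (hn : 0 < n) :
    tau n (Bdry n) = (inferInstance : TopologicalSpace (HalfSpace n)) := by
  refine le_antisymm (tau_le hn _) (le_generateFrom ?_)
  rintro s ((⟨a, -, ε, -, -, rfl⟩ | ⟨a, -, ε, -, rfl⟩) | ⟨a, ⟨ha, ha'⟩, -⟩)
  · exact isOpen_ball.preimage continuous_subtype_val
  · exact isOpen_ball.preimage continuous_subtype_val
  · exact absurd ha ha'

theorem exists_tangentBall_subset_of_mem_niemGen (hn : 0 < n) {a : HalfSpace n}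
    (ha : a.1 ∈ Bdry n \ A) {s : Set (HalfSpace n)} (hs : s ∈ niemGen n A) (has : a ∈ s) :
    ∃ ε > 0, Subtype.val ⁻¹' tangentBall n a ε ⊆ s := by
  rcases hs with (⟨b, -, ε, -, hεb, rfl⟩ | ⟨b, -, ε, -, rfl⟩) | ⟨b, hb, ε, hε, rfl⟩
  · have : 0 < lastCoord n a := ball_subset_openHalf hn hεb.le has
    exact (this.ne' ha.1).elim
  · obtain ⟨δ, hδ, hδb⟩ := Metric.isOpen_iff.1 isOpen_ball _ (show a.1 ∈ ball b ε from has)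
    refine ⟨δ / 2, half_pos hδ,
      preimage_mono ((tangentBall_subset_ball hn _ (half_pos hδ)).trans ?_)⟩
    rwa [mul_div_cancel₀ _ two_ne_zero]
  · rcases has with hab | hab
    · exact ⟨ε, hε, by rw [show a.1 = b from hab]⟩
    · have : 0 < lastCoord n a := ball_add_smul_eVec_subset_openHalf hn hb.1 ε hab
      exact (this.ne' ha.1).elim

theorem exists_tangentBall_subset_of_mem_nhds_tau (hn : 0 < n) {a : HalfSpace n}
    (ha : a.1 ∈ Bdry n \ A) {N : Set (HalfSpace n)} (hN : N ∈ @nhds _ (tau n A) a) :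
    ∃ ε > 0, Subtype.val ⁻¹' tangentBall n a ε ⊆ N := by
  obtain ⟨V, hVN, hV, haV⟩ := (@_root_.mem_nhds_iff _ (tau n A) _ _).1 hN
  suffices ∃ ε > 0, Subtype.val ⁻¹' tangentBall n a ε ⊆ V from
    let ⟨ε, hε, hεV⟩ := this; ⟨ε, hε, hεV.trans hVN⟩
  clear hVN hN
  induction hV with
  | basic s hs => exact exists_tangentBall_subset_of_mem_niemGen hn ha hs haV
  | univ => exact ⟨1, one_pos, subset_univ _⟩
  | inter s t _ _ ihs iht =>
    obtain ⟨ε₁, hε₁, h₁⟩ := ihs haV.1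
    obtain ⟨ε₂, hε₂, h₂⟩ := iht haV.2
    exact ⟨min ε₁ ε₂, lt_min hε₁ hε₂, subset_inter
      ((preimage_mono (tangentBall_mono hn _ (min_le_left _ _))).trans h₁)
      ((preimage_mono (tangentBall_mono hn _ (min_le_right _ _))).trans h₂)⟩
  | sUnion S _ ih =>
    obtain ⟨s, hsS, has⟩ := haV
    obtain ⟨ε, hε, hεs⟩ := ih s hsS has
    exact ⟨ε, hε, hεs.trans (subset_sUnion_of_mem hsS)⟩

end Tau

section LocallyCompact

variable {n : ℕ}

theorem continuous_lastCoord : Continuous (lastCoord n) := by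
  unfold lastCoord
  split_ifs <;> fun_prop

instance locallyCompactSpace_halfSpace : LocallyCompactSpace (HalfSpace n) :=
  (isClosed_Ici.preimage continuous_lastCoord).locallyCompactSpace

theorem exists_tendsto_mem_ball_diff_closedBall (hn : 2 ≤ n) {a : EuclideanSpace ℝ (Fin n)}
    (ha : lastCoord n a = 0) {ε : ℝ} (hε : 0 < ε) :
    ∃ q : ℝ → HalfSpace n, Tendsto q (𝓝[>] 0) (𝓝 ⟨a, ha.ge⟩) ∧ ∀ᶠ t in 𝓝[>] 0,
      (q t).1 ∈ ball (a + ε • eVec n) ε \ closedBall (a + (ε / 2) • eVec n) (ε / 2) := by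
  have hn₀ : 0 < n := by omega
  obtain ⟨w, hw, hwe⟩ := exists_norm_eq_one_inner_eVec_eq_zero hn
  have hq (t : ℝ) : a + t • w + (t ^ 2 / ε) • eVec n ∈ HalfSpace n := by
    change 0 ≤ lastCoord n _
    rw [lastCoord_add_smul_eVec hn₀, lastCoord_eq_inner hn₀, inner_add_right,
      real_inner_smul_right, real_inner_comm w, hwe, ← lastCoord_eq_inner hn₀, ha,
      mul_zero, zero_add, zero_add]
    exact div_nonneg (sq_nonneg t) hε.le
  refine ⟨fun t => ⟨_, hq t⟩, tendsto_subtype_rng.2 (Tendsto.mono_left ?_ nhdsWithin_le_nhds), ?_⟩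
  · exact (by fun_prop : Continuous fun t : ℝ => a + t • w + (t ^ 2 / ε) • eVec n).tendsto' _ _
      (by simp)
  · filter_upwards [Ioo_mem_nhdsGT hε] with t ht
    exact add_smul_add_smul_mem_ball_diff_closedBall (norm_eVec hn₀) hw hwe a ht.1 ht.2

theorem not_locallyCompactSpace_tau (hn : 2 ≤ n) {A : Set (EuclideanSpace ℝ (Fin n))}
    {a : EuclideanSpace ℝ (Fin n)} (ha : a ∈ Bdry n \ A) :
    ¬ @LocallyCompactSpace (HalfSpace n) (tau n A) := by
  intro hLC
  have hn₀ : 0 < n := by omega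
  have ha₀ : lastCoord n a = 0 := ha.1
  obtain ⟨K, hK, -, hKc⟩ := @LocallyCompactSpace.local_compact_nhds _ (tau n A) hLC
    ⟨a, ha₀.ge⟩ univ univ_mem
  obtain ⟨ε, hε, hεK⟩ := exists_tangentBall_subset_of_mem_nhds_tau hn₀ ha hK
  obtain ⟨q, hq_lim, hq_mem⟩ := exists_tendsto_mem_ball_diff_closedBall hn ha₀ hε
  have hclus := hKc.mapClusterPt_of_tendsto_of_le (tau_le hn₀ A)
    (hq_mem.mono fun t ht => hεK (Or.inr ht.1)) hq_lim
  obtain ⟨t, hmem, hnot⟩ :=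
    (((@mapClusterPt_iff_frequently _ (tau n A) _ _ _ _).1 hclus _
      (tangentBall_mem_nhds_tau ha (half_pos hε))).and_eventually hq_mem).exists
  exact hnot.2 (tangentBall_subset_closedBall hn₀ a (half_pos hε).le hmem)

theorem locallyCompactSpace_tau_iff (hn : 2 ≤ n) {A : Set (EuclideanSpace ℝ (Fin n))}
    (hA : A ⊆ Bdry n) : @LocallyCompactSpace (HalfSpace n) (tau n A) ↔ A = Bdry n := by
  refine ⟨fun hLC => ?_, ?_⟩
  · by_contra hne
    obtain ⟨a, ha⟩ := exists_of_ssubset (hA.ssubset_of_ne hne)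
    exact not_locallyCompactSpace_tau hn ha hLC
  · rintro rfl
    rw [tau_bdry (by omega)]
    infer_instance

end LocallyCompact

/-- For every `n ≥ 2` and `A ⊆ L`, the space `(X, τ(A))` is locally compact iff `A = L`,
equivalently iff `τ(A)` is the Euclidean subspace topology on `X`. -/
theorem tauA_locallyCompact_iff (n : ℕ) (hn : 2 ≤ n)
    (A : Set (EuclideanSpace ℝ (Fin n))) (hA : A ⊆ Bdry n) :
    (@LocallyCompactSpace (HalfSpace n) (tau n A) ↔ A = Bdry n) ∧
    (@LocallyCompactSpace (HalfSpace n) (tau n A) ↔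
      tau n A = (inferInstance : TopologicalSpace (HalfSpace n))) := by
  have hLC := locallyCompactSpace_tau_iff hn hA
  refine ⟨hLC, fun h => hLC.1 h ▸ tau_bdry (by omega), fun h => ?_⟩
  rw [h]
  infer_instance
end

section
/- For every n ≥ 2 and every subset A of L, the subspace (L, τ(A)|_L) is σ-compact if and only if A is an Fσ-set in L with its Euclidean subspace topology and L \ A is countable. -/
open Metric Set TopologicalSpace

section AuxNiem

open Metric Set TopologicalSpace Topology

variable {n : ℕ}

lemma abs_sub_coord_le_dist (x y : EuclideanSpace ℝ (Fin n)) (i : Fin n) :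
    |x i - y i| ≤ dist x y := by
  rw [EuclideanSpace.dist_eq, ← Real.sqrt_sq_eq_abs]
  refine Real.sqrt_le_sqrt ?_
  have h := Finset.single_le_sum (f := fun j => dist (x j) (y j) ^ 2)
      (fun j _ => sq_nonneg _) (Finset.mem_univ i)
  simpa [Real.dist_eq] using h

lemma abs_lastCoord_le_dist (hn : 0 < n) (x y : EuclideanSpace ℝ (Fin n)) :
    |lastCoord n x - lastCoord n y| ≤ dist x y := by
  simp only [lastCoord, dif_pos hn]
  exact abs_sub_coord_le_dist x y _

lemma lastCoord_add_smul (hn : 0 < n) (a : EuclideanSpace ℝ (Fin n)) (ε : ℝ) :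
    lastCoord n (a + ε • eVec n) = lastCoord n a + ε := by
  simp only [lastCoord, eVec, dif_pos hn]
  simp [PiLp.add_apply, PiLp.smul_apply, EuclideanSpace.single_apply]

lemma not_mem_ball_of_bdry (hn : 0 < n) {a x : EuclideanSpace ℝ (Fin n)} {ε : ℝ}
    (hx : lastCoord n x = 0) (hε : ε < lastCoord n a) (hx' : x ∈ ball a ε) : False := by
  have h2 : lastCoord n a ≤ dist x a := by
    have h := abs_lastCoord_le_dist hn x a
    rw [hx, zero_sub, abs_neg] at h
    exact (le_abs_self _).trans h
  rw [mem_ball] at hx'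
  linarith

lemma tangent_eq_of_bdry (hn : 0 < n) {a x : EuclideanSpace ℝ (Fin n)} {ε : ℝ}
    (hx : lastCoord n x = 0) (ha : lastCoord n a = 0)
    (h : x ∈ tangentBall n a ε) : x = a := by
  rcases h with h | h
  · simpa using h
  · exfalso
    have h1 := abs_lastCoord_le_dist hn x (a + ε • eVec n)
    rw [hx, lastCoord_add_smul hn, ha, zero_add, zero_sub, abs_neg] at h1
    rw [mem_ball] at h
    have := le_abs_self ε
    linarith

end AuxNiem
section AuxNiem2

open Metric Set TopologicalSpace Topology

variable {n : ℕ} {A : Set (EuclideanSpace ℝ (Fin n))}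

lemma isOpen_tauL_iff (hn : 0 < n) (hA : A ⊆ Bdry n) {U : Set (Bdry n)} :
    IsOpen[tauL n A] U ↔
      ∀ x ∈ U, (x : EuclideanSpace ℝ (Fin n)) ∈ A → ∃ ε > 0, ball x ε ⊆ U := by
  constructor
  · intro h
    obtain ⟨V, hV, rfl⟩ := (isOpen_induced_iff (t := tau n A) (f := inclLX n)).mp h
    have hV' : TopologicalSpace.GenerateOpen (niemGen n A) V := hV
    have key : ∀ W, TopologicalSpace.GenerateOpen (niemGen n A) W → ∀ x : Bdry n,
        inclLX n x ∈ W → (x : EuclideanSpace ℝ (Fin n)) ∈ A →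
        ∃ ε > 0, ∀ y : Bdry n, dist y x < ε → inclLX n y ∈ W := by
      intro W hW
      induction hW with
      | basic s hs =>
        intro x hx hxA
        rcases hs with (⟨a, haP, ε, hε0, hεa, rfl⟩ | ⟨a, haA, ε, hε0, rfl⟩) |
          ⟨a, ha, ε, hε0, rfl⟩
        · exact (not_mem_ball_of_bdry hn x.2 hεa hx).elim
        · have hx' : dist (x : EuclideanSpace ℝ (Fin n)) a < ε := hx
          refine ⟨ε - dist (x : EuclideanSpace ℝ (Fin n)) a, by linarith, fun y hy => ?_⟩
          have h3 : dist (y : EuclideanSpace ℝ (Fin n)) a ≤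
              dist (y : EuclideanSpace ℝ (Fin n)) (x : EuclideanSpace ℝ (Fin n)) +
              dist (x : EuclideanSpace ℝ (Fin n)) a := dist_triangle _ _ _
          have hy' : dist (y : EuclideanSpace ℝ (Fin n)) (x : EuclideanSpace ℝ (Fin n)) <
              ε - dist (x : EuclideanSpace ℝ (Fin n)) a := hy
          show dist (y : EuclideanSpace ℝ (Fin n)) a < ε
          linarith
        · have := tangent_eq_of_bdry hn x.2 ha.1 hx
          exact absurd (this ▸ hxA) ha.2
      | univ => exact fun x _ _ => ⟨1, one_pos, fun y _ => trivial⟩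
      | inter s t _ _ ihs iht =>
        intro x hx hxA
        obtain ⟨ε1, h1, hb1⟩ := ihs x hx.1 hxA
        obtain ⟨ε2, h2, hb2⟩ := iht x hx.2 hxA
        exact ⟨min ε1 ε2, lt_min h1 h2, fun y hy =>
          ⟨hb1 y (hy.trans_le (min_le_left _ _)), hb2 y (hy.trans_le (min_le_right _ _))⟩⟩
      | sUnion S _ ih =>
        rintro x ⟨s, hsS, hxs⟩ hxA
        obtain ⟨ε, hε, hb⟩ := ih s hsS x hxs hxA
        exact ⟨ε, hε, fun y hy => ⟨s, hsS, hb y hy⟩⟩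
    intro x hx hxA
    obtain ⟨ε, hε, hb⟩ := key V hV' x hx hxA
    exact ⟨ε, hε, fun y hy => hb y (by rwa [mem_ball] at hy)⟩
  · intro hU
    classical
    choose! ε hε hb using hU
    set V : Set (HalfSpace n) :=
      (⋃ x ∈ {x : Bdry n | x ∈ U ∧ (x : EuclideanSpace ℝ (Fin n)) ∈ A},
        Subtype.val ⁻¹' ball (x : EuclideanSpace ℝ (Fin n)) (ε x)) ∪
      (⋃ x ∈ {x : Bdry n | x ∈ U ∧ (x : EuclideanSpace ℝ (Fin n)) ∉ A},
        Subtype.val ⁻¹' tangentBall n (x : EuclideanSpace ℝ (Fin n)) 1) with hVdef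
    have hVopen : IsOpen[tau n A] V := by
      letI := tau n A
      apply IsOpen.union
      · exact isOpen_biUnion fun x hx =>
          TopologicalSpace.isOpen_generateFrom_of_mem
            (Or.inl (Or.inr ⟨x.1, hx.2, ε x, hε x hx.1 hx.2, rfl⟩))
      · exact isOpen_biUnion fun x hx =>
          TopologicalSpace.isOpen_generateFrom_of_mem
            (Or.inr ⟨x.1, ⟨x.2, hx.2⟩, 1, one_pos, rfl⟩)
    have hpre : inclLX n ⁻¹' V = U := by
      apply Subset.antisymm
      · rintro z (hz | hz)
        · obtain ⟨x, hx, hz⟩ := mem_iUnion₂.mp hz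
          exact hb x hx.1 hx.2 (by exact hz)
        · obtain ⟨x, hx, hz⟩ := mem_iUnion₂.mp hz
          have hzx : z = x := Subtype.ext (tangent_eq_of_bdry hn z.2 x.2 hz)
          rw [hzx]; exact hx.1
      · intro z hz
        by_cases hzA : (z : EuclideanSpace ℝ (Fin n)) ∈ A
        · refine Or.inl (mem_iUnion₂.mpr ⟨z, ⟨hz, hzA⟩, ?_⟩)
          show dist (z : EuclideanSpace ℝ (Fin n)) (z : EuclideanSpace ℝ (Fin n)) < ε z
          simpa using hε z hz hzA
        · exact Or.inr (mem_iUnion₂.mpr ⟨z, ⟨hz, hzA⟩, Or.inl rfl⟩)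
    exact (isOpen_induced_iff (t := tau n A) (f := inclLX n)).mpr ⟨V, hVopen, hpre⟩

end AuxNiem2
section AuxNiem3

open Metric Set TopologicalSpace Topology

variable {n : ℕ} {A : Set (EuclideanSpace ℝ (Fin n))}

lemma tauL_le (hn : 0 < n) (hA : A ⊆ Bdry n) {U : Set (Bdry n)} (hU : IsOpen U) :
    IsOpen[tauL n A] U := by
  rw [isOpen_tauL_iff hn hA]
  intro x hx _
  exact Metric.isOpen_iff.mp hU x hx

lemma isCompact_of_tauL_isCompact (hn : 0 < n) (hA : A ⊆ Bdry n) {K : Set (Bdry n)}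
    (hK : @IsCompact _ (tauL n A) K) : IsCompact K := by
  refine isCompact_of_finite_subcover fun {ι} U hUo hcov => ?_
  exact @IsCompact.elim_finite_subcover _ (tauL n A) _ _ hK U
    (fun i => tauL_le hn hA (hUo i)) hcov

lemma tauL_isCompact_of_isCompact (hn : 0 < n) (hA : A ⊆ Bdry n) {C : Set (Bdry n)}
    (hC : IsCompact C) (hCA : ∀ x ∈ C, (x : EuclideanSpace ℝ (Fin n)) ∈ A) :
    @IsCompact _ (tauL n A) C := by
  classical
  refine @isCompact_of_finite_subcover _ (tauL n A) _ (fun {ι} U hUo hcov => ?_)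
  have hx : ∀ x ∈ C, ∃ (i : ι) (ε : ℝ), 0 < ε ∧ ball x ε ⊆ U i := by
    intro x hxC
    obtain ⟨i, hi⟩ := mem_iUnion.mp (hcov hxC)
    obtain ⟨ε, hε, hbs⟩ := (isOpen_tauL_iff hn hA).mp (hUo i) x hi (hCA x hxC)
    exact ⟨i, ε, hε, hbs⟩
  choose f ε hε hb using hx
  obtain ⟨t, htcov⟩ := hC.elim_nhds_subcover' (fun x hx => ball x (ε x hx))
    (fun x hx => ball_mem_nhds _ (hε x hx))
  refine ⟨t.image (fun x => f x.1 x.2), fun y hy => ?_⟩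
  obtain ⟨x, hxt, hyx⟩ := mem_iUnion₂.mp (htcov hy)
  exact mem_iUnion₂.mpr ⟨f x.1 x.2, Finset.mem_image_of_mem _ hxt, hb x.1 x.2 hyx⟩

lemma finite_near_of_tauL_compact (hn : 0 < n) (hA : A ⊆ Bdry n) {K : Set (Bdry n)}
    (hK : @IsCompact _ (tauL n A) K) (d : Bdry n)
    (hd : (d : EuclideanSpace ℝ (Fin n)) ∉ A) :
    ∃ δ > 0, (K ∩ ball d δ).Finite := by
  classical
  set V : Bdry n → Set (Bdry n) := fun a =>
    if (a : EuclideanSpace ℝ (Fin n)) ∈ A then ball a (dist a d / 2) else {a} with hVdef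
  have hVopen : ∀ a, IsOpen[tauL n A] (V a) := by
    intro a
    by_cases haA : (a : EuclideanSpace ℝ (Fin n)) ∈ A
    · rw [hVdef]; simp only [if_pos haA]
      exact tauL_le hn hA isOpen_ball
    · rw [hVdef]; simp only [if_neg haA]
      rw [isOpen_tauL_iff hn hA]
      rintro x hx hxA
      rw [mem_singleton_iff] at hx
      exact absurd (hx ▸ hxA) haA
  have hcov : K ⊆ ⋃ a, V a := by
    intro x _
    refine mem_iUnion.mpr ⟨x, ?_⟩
    by_cases h : (x : EuclideanSpace ℝ (Fin n)) ∈ A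
    · rw [hVdef]; simp only [if_pos h]
      have hxd : x ≠ d := fun he => hd (he ▸ h)
      exact mem_ball_self (by have : 0 < dist x d := dist_pos.mpr hxd; linarith)
    · rw [hVdef]; simp only [if_neg h]; exact rfl
  obtain ⟨t, ht⟩ := @IsCompact.elim_finite_subcover _ (tauL n A) _ _ hK V hVopen hcov
  by_cases hne : ∃ b ∈ t, (b : EuclideanSpace ℝ (Fin n)) ∈ A
  case pos =>
    obtain ⟨b, hbt, hbA⟩ := hne
    have hne : (t.filter fun a : Bdry n => (a : EuclideanSpace ℝ (Fin n)) ∈ A).Nonempty :=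
      ⟨b, Finset.mem_filter.mpr ⟨hbt, hbA⟩⟩
    set δ := (t.filter fun a : Bdry n => (a : EuclideanSpace ℝ (Fin n)) ∈ A).inf' hne
      (fun a => dist a d / 2) with hδdef
    have hδpos : 0 < δ := by
      rw [hδdef, Finset.lt_inf'_iff]
      intro a ha
      have haA := (Finset.mem_filter.mp ha).2
      have had : a ≠ d := fun he => hd (he ▸ haA)
      have : 0 < dist a d := dist_pos.mpr had
      linarith
    refine ⟨δ, hδpos, t.finite_toSet.subset ?_⟩
    rintro y ⟨hyK, hyb⟩
    obtain ⟨a, hat, hya⟩ := mem_iUnion₂.mp (ht hyK)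
    by_cases haA : (a : EuclideanSpace ℝ (Fin n)) ∈ A
    · exfalso
      rw [hVdef] at hya; simp only [if_pos haA] at hya
      have h1 : δ ≤ dist a d / 2 := by
        rw [hδdef]
        apply Finset.inf'_le
        exact Finset.mem_filter.mpr ⟨hat, haA⟩
      have h2 : dist y d < δ := mem_ball.mp hyb
      have h3 : dist a y < dist a d / 2 := by rw [dist_comm]; exact mem_ball.mp hya
      have h4 : dist a d ≤ dist a y + dist y d := dist_triangle _ _ _
      linarith
    · rw [hVdef] at hya; simp only [if_neg haA, mem_singleton_iff] at hya
      rw [hya]; exact Finset.mem_coe.mpr hat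
  case neg =>
    refine ⟨1, one_pos, t.finite_toSet.subset ?_⟩
    rintro y ⟨hyK, _⟩
    obtain ⟨a, hat, hya⟩ := mem_iUnion₂.mp (ht hyK)
    have haA : (a : EuclideanSpace ℝ (Fin n)) ∉ A := fun h =>
      hne ⟨a, hat, h⟩
    rw [hVdef] at hya; simp only [if_neg haA, mem_singleton_iff] at hya
    rw [hya]; exact Finset.mem_coe.mpr hat

lemma countable_of_forall_nhds_countable {X : Type*} [TopologicalSpace X]
    [SecondCountableTopology X] {S : Set X}
    (h : ∀ x ∈ S, ∃ U, IsOpen U ∧ x ∈ U ∧ (S ∩ U).Countable) : S.Countable := by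
  have hsub : S ⊆ ⋃ b ∈ {b ∈ countableBasis X | (S ∩ b).Countable}, (S ∩ b) := by
    intro x hx
    obtain ⟨U, hUo, hxU, hcnt⟩ := h x hx
    obtain ⟨b, hb, hxb, hbU⟩ :=
      (isBasis_countableBasis X).exists_subset_of_mem_open hxU hUo
    exact mem_biUnion ⟨hb, hcnt.mono (inter_subset_inter_right _ hbU)⟩ ⟨hx, hxb⟩
  exact Set.Countable.mono hsub
    (Set.Countable.biUnion ((countable_countableBasis X).mono (sep_subset _ _))
      (fun b hb => hb.2))

lemma isClosed_inter_A_of_tauL_compact (hn : 0 < n) (hA : A ⊆ Bdry n) {K : Set (Bdry n)}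
    (hK : @IsCompact _ (tauL n A) K) :
    IsClosed (K ∩ (Subtype.val ⁻¹' A) : Set (Bdry n)) := by
  have hKc : IsCompact K := isCompact_of_tauL_isCompact hn hA hK
  rw [← closure_subset_iff_isClosed]
  intro x hx
  have hxK : x ∈ K :=
    hKc.isClosed.closure_subset (closure_mono inter_subset_left hx)
  refine ⟨hxK, ?_⟩
  by_contra hxA
  obtain ⟨δ, hδ, hfin⟩ := finite_near_of_tauL_compact hn hA hK x hxA
  have h1 : x ∈ closure (ball x δ ∩ (K ∩ Subtype.val ⁻¹' A)) :=
    isOpen_ball.inter_closure ⟨mem_ball_self hδ, hx⟩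
  have h2 : (ball x δ ∩ (K ∩ Subtype.val ⁻¹' A)).Finite :=
    hfin.subset (fun y hy => ⟨hy.2.1, hy.1⟩)
  have h3 := h2.isClosed.closure_subset h1
  exact hxA h3.2.2

end AuxNiem3
/-- For every `n ≥ 2` and `A ⊆ L`, the subspace `(L, τ(A)|_L)` is σ-compact iff
`A` is an `Fσ`-set in the Euclidean topology of `L` and `L \ A` is countable. -/
theorem tauL_sigmaCompact_iff (n : ℕ) (hn : 2 ≤ n)
    (A : Set (EuclideanSpace ℝ (Fin n))) (hA : A ⊆ Bdry n) :
    @SigmaCompactSpace (Bdry n) (tauL n A) ↔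
      IsFsigma (Subtype.val ⁻¹' A : Set (Bdry n)) ∧ (Bdry n \ A).Countable := by
  have hn0 : 0 < n := by omega
  constructor
  · intro h
    obtain ⟨K, hKcomp, hKcov⟩ := h.isSigmaCompact_univ
    constructor
    · refine ⟨fun i => K i ∩ Subtype.val ⁻¹' A,
        fun i => isClosed_inter_A_of_tauL_compact hn0 hA (hKcomp i), ?_⟩
      ext x
      simp only [mem_iUnion, mem_inter_iff, mem_preimage]
      constructor
      · intro hx
        have hxK : x ∈ ⋃ i, K i := by rw [hKcov]; exact mem_univ x
        obtain ⟨i, hi⟩ := mem_iUnion.mp hxK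
        exact ⟨i, hi, hx⟩
      · rintro ⟨i, _, hx⟩
        exact hx
    · have hD : (Subtype.val ⁻¹' (Bdry n \ A) : Set (Bdry n)).Countable := by
        have hDU : (Subtype.val ⁻¹' (Bdry n \ A) : Set (Bdry n)) =
            ⋃ i, (K i ∩ Subtype.val ⁻¹' (Bdry n \ A)) := by
          ext x
          simp only [mem_iUnion, mem_inter_iff]
          constructor
          · intro hx
            have hxK : x ∈ ⋃ i, K i := by rw [hKcov]; exact mem_univ x
            obtain ⟨i, hi⟩ := mem_iUnion.mp hxK
            exact ⟨i, hi, hx⟩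
          · rintro ⟨i, _, hx⟩; exact hx
        rw [hDU]
        refine countable_iUnion fun i => ?_
        refine countable_of_forall_nhds_countable fun x hx => ?_
        obtain ⟨δ, hδ, hfin⟩ :=
          finite_near_of_tauL_compact hn0 hA (hKcomp i) x hx.2.2
        exact ⟨ball x δ, isOpen_ball, mem_ball_self hδ,
          (hfin.subset fun y hy => ⟨hy.1.1, hy.2⟩).countable⟩
      have himg : Bdry n \ A =
          Subtype.val '' (Subtype.val ⁻¹' (Bdry n \ A) : Set (Bdry n)) := by
        rw [Subtype.image_preimage_coe]
        exact (inter_eq_self_of_subset_right diff_subset).symm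
      rw [himg]
      exact hD.image _
  · rintro ⟨⟨F, hFc, hFU⟩, hcnt⟩
    have hBc : IsClosed (Bdry n) := by
      have hcont : Continuous (lastCoord n) := by
        refine LipschitzWith.continuous (K := 1) ?_
        refine LipschitzWith.of_dist_le_mul fun x y => ?_
        rw [Real.dist_eq, NNReal.coe_one, one_mul]
        exact abs_lastCoord_le_dist hn0 x y
      exact isClosed_singleton.preimage hcont
    have hFsub : ∀ i, F i ⊆ (Subtype.val ⁻¹' A : Set (Bdry n)) := fun i =>
      hFU ▸ subset_iUnion F i
    have hcompFE : ∀ (i m : ℕ),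
        IsCompact (F i ∩ Subtype.val ⁻¹' closedBall (0 : EuclideanSpace ℝ (Fin n)) m :
          Set (Bdry n)) := by
      intro i m
      have h1 : IsCompact (Subtype.val ⁻¹' closedBall (0 : EuclideanSpace ℝ (Fin n)) m :
          Set (Bdry n)) := by
        rw [Subtype.isCompact_iff, Subtype.image_preimage_coe]
        exact (isCompact_closedBall _ _).inter_left hBc
      exact h1.inter_left (hFc i)
    have hcompF : ∀ (i m : ℕ),
        @IsCompact _ (tauL n A)
          (F i ∩ Subtype.val ⁻¹' closedBall (0 : EuclideanSpace ℝ (Fin n)) m) :=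
      fun i m => tauL_isCompact_of_isCompact hn0 hA (hcompFE i m)
        (fun x hx => hFsub i hx.1)
    have hDc : (Subtype.val ⁻¹' (Bdry n \ A) : Set (Bdry n)).Countable :=
      hcnt.preimage Subtype.val_injective
    haveI := hDc.to_subtype
    let G : (ℕ × ℕ) ⊕ ↥(Subtype.val ⁻¹' (Bdry n \ A) : Set (Bdry n)) → Set (Bdry n) :=
      fun j => Sum.elim
        (fun p : ℕ × ℕ =>
          F p.1 ∩ Subtype.val ⁻¹' closedBall (0 : EuclideanSpace ℝ (Fin n)) p.2)
        (fun d => {d.1}) j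
    have hGcomp : ∀ j, @IsCompact _ (tauL n A) (G j) := by
      rintro (⟨i, m⟩ | d)
      · exact hcompF i m
      · exact @isCompact_singleton _ (tauL n A) _
    have hGuniv : ⋃ j, G j = (univ : Set (Bdry n)) := by
      refine eq_univ_of_forall fun x => ?_
      by_cases hxA : (x : EuclideanSpace ℝ (Fin n)) ∈ A
      · have hxU : x ∈ ⋃ i, F i := by
          rw [← hFU]; exact hxA
        obtain ⟨i, hi⟩ := mem_iUnion.mp hxU
        refine mem_iUnion.mpr ⟨Sum.inl (i, ⌈‖(x : EuclideanSpace ℝ (Fin n))‖⌉₊), hi, ?_⟩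
        show (x : EuclideanSpace ℝ (Fin n)) ∈ closedBall 0 _
        rw [mem_closedBall, dist_zero_right]
        exact Nat.le_ceil _
      · exact mem_iUnion.mpr ⟨Sum.inr ⟨x, x.2, hxA⟩, rfl⟩
    have hmain : @IsSigmaCompact _ (tauL n A) (univ : Set (Bdry n)) := by
      rw [← hGuniv]
      exact @isSigmaCompact_iUnion_of_isCompact _ _ (tauL n A) _ G hGcomp
    exact @SigmaCompactSpace.mk _ (tauL n A) hmain
end
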